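/- The map ψ: H → G × G defined by the action on the two subtrees (ψ(h) = (h₀, h₁) where h(0σ) = 0h₀(σ) and h(1σ) = 1h₁(σ)) is an injective group homomorphism satisfying ψ(b) = (a,c), ψ(c) = (a,d), ψ(d) = (1,b), ψ(b^a) = (c,a), ψ(c^a) = (d,a), ψ(d^a) = (b,1). -/

import Mathlib

/-- The generator `a` of the Grigorchuk group, acting on finite binary sequences. -/
def grigA : List Bool → List Bool
  | [] => []
  | x :: σ => (!x) :: σ

mutual
  /-- The generator `b` of the Grigorchuk group. -/
  def grigB : List Bool → List Bool
    | [] => []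
    | false :: σ => false :: grigA σ
    | true :: σ => true :: grigC σ
  /-- The generator `c` of the Grigorchuk group. -/
  def grigC : List Bool → List Bool
    | [] => []
    | false :: σ => false :: grigA σ
    | true :: σ => true :: grigD σ
  /-- The generator `d` of the Grigorchuk group. -/
  def grigD : List Bool → List Bool
    | [] => []
    | false :: σ => false :: σ
    | true :: σ => true :: grigB σ
end

theorem grigA_involutive : Function.Involutive grigA := by
  intro l
  rcases l with _ | ⟨x, σ⟩
  · rfl
  · cases x <;> rfl

theorem grigBCD_involutive :
    ∀ l : List Bool, grigB (grigB l) = l ∧ grigC (grigC l) = l ∧ grigD (grigD l) = l := by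
  intro l
  induction l with
  | nil => exact ⟨rfl, rfl, rfl⟩
  | cons x σ ih =>
      cases x <;>
        simp [grigB, grigC, grigD, grigA_involutive σ, ih.1, ih.2.1, ih.2.2]

theorem grigB_involutive : Function.Involutive grigB := fun l => (grigBCD_involutive l).1
theorem grigC_involutive : Function.Involutive grigC := fun l => (grigBCD_involutive l).2.1
theorem grigD_involutive : Function.Involutive grigD := fun l => (grigBCD_involutive l).2.2

/-- The generator `a` as a permutation of binary sequences. -/
def aP : Equiv.Perm (List Bool) := grigA_involutive.toPerm
/-- The generator `b` as a permutation of binary sequences. -/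
def bP : Equiv.Perm (List Bool) := grigB_involutive.toPerm
/-- The generator `c` as a permutation of binary sequences. -/
def cP : Equiv.Perm (List Bool) := grigC_involutive.toPerm
/-- The generator `d` as a permutation of binary sequences. -/
def dP : Equiv.Perm (List Bool) := grigD_involutive.toPerm

/-- The Grigorchuk group, as the group of permutations of finite binary sequences
generated by `a`, `b`, `c`, `d`. -/
def Grig : Subgroup (Equiv.Perm (List Bool)) := Subgroup.closure {aP, bP, cP, dP}

/-- `a` as an element of the Grigorchuk group. -/
def ga : Grig := ⟨aP, Subgroup.subset_closure (by simp)⟩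
/-- `b` as an element of the Grigorchuk group. -/
def gb : Grig := ⟨bP, Subgroup.subset_closure (by simp)⟩
/-- `c` as an element of the Grigorchuk group. -/
def gc : Grig := ⟨cP, Subgroup.subset_closure (by simp)⟩
/-- `d` as an element of the Grigorchuk group. -/
def gd : Grig := ⟨dP, Subgroup.subset_closure (by simp)⟩

/-- A permutation of binary sequences preserves the first letter. -/
def FixesFirst (g : Equiv.Perm (List Bool)) : Prop :=
  ∀ (x : Bool) (σ : List Bool), ∃ σ' : List Bool, g (x :: σ) = x :: σ'

/-- The defining property of the subtree-decomposition map `ψ : H → G × G`: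
`h(0σ) = 0·h₀(σ)` and `h(1σ) = 1·h₁(σ)` where `ψ(h) = (h₀, h₁)`. -/
def PsiProp (H : Subgroup Grig) (ψ : H →* Grig × Grig) : Prop :=
  ∀ (h : H) (σ : List Bool),
    ((h : Grig) : Equiv.Perm (List Bool)) (false :: σ) =
        false :: (((ψ h).1 : Grig) : Equiv.Perm (List Bool)) σ ∧
    ((h : Grig) : Equiv.Perm (List Bool)) (true :: σ) =
        true :: (((ψ h).2 : Grig) : Equiv.Perm (List Bool)) σ

/-! The first-letter stabilizer of `Perm (List Bool)` fixes `[]` (the preimage of `[]` cannot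
be a nonempty word), so its elements are determined by their actions on the two subtrees, and
`h ↦ (h₀, h₁)` is an injective homomorphism into `Perm (List Bool) × Perm (List Bool)`.
Each generator of `G` flips the first letter or not, uniformly, and acts on the subtrees by
elements of `{1, a, b, c, d}`; permutations of this shape with sections in `G` form a subgroup,
hence contain `G`, so `ψ` lands in `G × G`. The six values are then read off the definitions. -/

open Equiv

def selfSimilarOver (K : Subgroup (Perm (List Bool))) : Subgroup (Perm (List Bool)) where
  carrier := {g | ∃ s : Bool, ∀ x, ∃ p ∈ K, ∀ σ, g (x :: σ) = (s ^^ x) :: p σ}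
  one_mem' := ⟨false, fun _ => ⟨1, K.one_mem, fun _ => by simp⟩⟩
  mul_mem' := by
    rintro g h ⟨s, hg⟩ ⟨t, hh⟩
    refine ⟨s ^^ t, fun x => ?_⟩
    obtain ⟨q, hqK, hq⟩ := hh x
    obtain ⟨p, hpK, hp⟩ := hg (t ^^ x)
    exact ⟨p * q, K.mul_mem hpK hqK, fun σ => by simp [hq, hp]⟩
  inv_mem' := by
    rintro g ⟨s, hg⟩
    refine ⟨s, fun x => ?_⟩
    obtain ⟨p, hpK, hp⟩ := hg (s ^^ x)
    refine ⟨p⁻¹, K.inv_mem hpK, fun σ => ?_⟩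
    rw [Perm.inv_eq_iff_eq, hp]
    simp

theorem mem_selfSimilarOver {K : Subgroup (Perm (List Bool))} {g : Perm (List Bool)} :
    g ∈ selfSimilarOver K ↔ ∃ s : Bool, ∀ x, ∃ p ∈ K, ∀ σ, g (x :: σ) = (s ^^ x) :: p σ :=
  Iff.rfl

theorem grig_le_selfSimilarOver : Grig ≤ selfSimilarOver Grig := by
  refine (Subgroup.closure_le _).2 ?_
  rintro g (rfl | rfl | rfl | rfl) <;> rw [SetLike.mem_coe, mem_selfSimilarOver]
  · exact ⟨true, fun x => ⟨1, Grig.one_mem, fun _ => by cases x <;> rfl⟩⟩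
  · refine ⟨false, fun x => ?_⟩
    cases x
    exacts [⟨aP, ga.2, fun _ => rfl⟩, ⟨cP, gc.2, fun _ => rfl⟩]
  · refine ⟨false, fun x => ?_⟩
    cases x
    exacts [⟨aP, ga.2, fun _ => rfl⟩, ⟨dP, gd.2, fun _ => rfl⟩]
  · refine ⟨false, fun x => ?_⟩
    cases x
    exacts [⟨1, Grig.one_mem, fun _ => rfl⟩, ⟨bP, gb.2, fun _ => rfl⟩]

section FixesFirst

variable {g h : Perm (List Bool)}

theorem FixesFirst.apply_nil (hg : FixesFirst g) : g [] = [] := by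
  obtain ⟨l, hl⟩ := g.surjective []
  cases l with
  | nil => exact hl
  | cons x σ =>
    obtain ⟨σ', hσ'⟩ := hg x σ
    exact absurd (hσ'.symm.trans hl) (List.cons_ne_nil _ _)

theorem FixesFirst.apply_cons (hg : FixesFirst g) (x : Bool) (σ : List Bool) :
    g (x :: σ) = x :: (g (x :: σ)).tail := by
  obtain ⟨σ', hσ'⟩ := hg x σ
  rw [hσ', List.tail_cons]

theorem FixesFirst.inv (hg : FixesFirst g) : FixesFirst g⁻¹ := by
  intro x σ
  cases hl : g⁻¹ (x :: σ) with
  | nil =>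
    rw [Perm.inv_eq_iff_eq, hg.apply_nil] at hl
    exact absurd hl (List.cons_ne_nil _ _)
  | cons y τ =>
    rw [Perm.inv_eq_iff_eq, hg.apply_cons, List.cons.injEq] at hl
    exact ⟨τ, hl.1 ▸ rfl⟩

theorem FixesFirst.ext (hg : FixesFirst g) (hh : FixesFirst h)
    (hgh : ∀ x σ, (g (x :: σ)).tail = (h (x :: σ)).tail) : g = h := by
  ext l : 1
  cases l with
  | nil => rw [hg.apply_nil, hh.apply_nil]
  | cons x σ => rw [hg.apply_cons, hh.apply_cons, hgh]

end FixesFirst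

def firstLetterStabilizer : Subgroup (Perm (List Bool)) where
  carrier := {g | FixesFirst g}
  one_mem' _ σ := ⟨σ, rfl⟩
  mul_mem' {g h} hg hh x σ := by
    obtain ⟨τ, hτ⟩ := hh x σ
    obtain ⟨τ', hτ'⟩ := hg x τ
    exact ⟨τ', by rw [Perm.mul_apply, hτ, hτ']⟩
  inv_mem' hg := FixesFirst.inv hg

def subtreeHom (x : Bool) : firstLetterStabilizer →* Perm (List Bool) where
  toFun g :=
    { toFun σ := ((g : Perm (List Bool)) (x :: σ)).tail
      invFun σ := ((g : Perm (List Bool))⁻¹ (x :: σ)).tail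
      left_inv σ := by
        dsimp only
        rw [← g.2.apply_cons]
        simp
      right_inv σ := by
        dsimp only
        rw [← g.2.inv.apply_cons]
        simp }
  map_one' := rfl
  map_mul' g h := Equiv.ext fun σ => by
    rw [coe_fn_mk, Subgroup.coe_mul, Perm.mul_apply, h.2.apply_cons x σ]
    rfl

theorem subtreeHom_apply (x : Bool) (g : firstLetterStabilizer) (σ : List Bool) :
    subtreeHom x g σ = ((g : Perm (List Bool)) (x :: σ)).tail := rfl

abbrev grigStabilizer : Subgroup Grig := firstLetterStabilizer.subgroupOf Grig

theorem subtreeHom_mem_grig (x : Bool) {g : firstLetterStabilizer}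
    (hg : (g : Perm (List Bool)) ∈ Grig) : subtreeHom x g ∈ Grig := by
  obtain ⟨s, hs⟩ := grig_le_selfSimilarOver hg
  obtain ⟨p, hpG, hp⟩ := hs x
  convert hpG
  ext σ
  rw [subtreeHom_apply, hp, List.tail_cons]

def grigStabilizerToStabilizer : grigStabilizer →* firstLetterStabilizer :=
  (Grig.subtype.comp grigStabilizer.subtype).codRestrict _ fun h => h.2

def grigSubtreeHom (x : Bool) : grigStabilizer →* Grig :=
  ((subtreeHom x).comp grigStabilizerToStabilizer).codRestrict Grig fun h =>
    subtreeHom_mem_grig x (h : Grig).2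

/-- The map `ψ(h) = (h₀, h₁)`. -/
def grigPsi : grigStabilizer →* Grig × Grig :=
  (grigSubtreeHom false).prod (grigSubtreeHom true)

theorem psiProp_grigPsi : PsiProp grigStabilizer grigPsi :=
  fun h σ => ⟨FixesFirst.apply_cons h.2 false σ, FixesFirst.apply_cons h.2 true σ⟩

theorem grigPsi_injective : Function.Injective grigPsi := by
  intro h h' hψ
  have hsub : ∀ x, grigSubtreeHom x h = grigSubtreeHom x h' := by
    intro x
    cases x
    exacts [congrArg Prod.fst hψ, congrArg Prod.snd hψ]
  refine Subtype.ext <| Subtype.ext <| FixesFirst.ext h.2 h'.2 fun x σ => ?_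
  exact congrArg (fun g : Grig => (g : Perm (List Bool)) σ) (hsub x)

theorem grigPsi_eq_of_apply_cons {h : grigStabilizer} {p q : Grig}
    (hp : ∀ σ, ((h : Grig) : Perm (List Bool)) (false :: σ) = false :: (p : Perm (List Bool)) σ)
    (hq : ∀ σ, ((h : Grig) : Perm (List Bool)) (true :: σ) = true :: (q : Perm (List Bool)) σ) :
    grigPsi h = (p, q) := by
  refine Prod.ext (Subtype.ext <| Equiv.ext fun σ => ?_) (Subtype.ext <| Equiv.ext fun σ => ?_)
  · exact (congrArg List.tail (hp σ) :)
  · exact (congrArg List.tail (hq σ) :)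

/-- The subtree-decomposition map `ψ : H → G × G` on the first-level stabilizer `H` of
the Grigorchuk group is an injective group homomorphism with `ψ(b) = (a,c)`,
`ψ(c) = (a,d)`, `ψ(d) = (1,b)`, `ψ(b^a) = (c,a)`, `ψ(c^a) = (d,a)`, `ψ(d^a) = (b,1)`. -/
theorem grigorchuk_psi_injective_hom :
    ∃ H : Subgroup Grig,
      (∀ g : Grig, g ∈ H ↔ FixesFirst (g : Equiv.Perm (List Bool))) ∧
      ∃ ψ : H →* Grig × Grig,
        Function.Injective ψ ∧ PsiProp H ψ ∧
        (∀ hm : gb ∈ H, ψ ⟨gb, hm⟩ = (ga, gc)) ∧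
        (∀ hm : gc ∈ H, ψ ⟨gc, hm⟩ = (ga, gd)) ∧
        (∀ hm : gd ∈ H, ψ ⟨gd, hm⟩ = (1, gb)) ∧
        (∀ hm : ga * gb * ga ∈ H, ψ ⟨ga * gb * ga, hm⟩ = (gc, ga)) ∧
        (∀ hm : ga * gc * ga ∈ H, ψ ⟨ga * gc * ga, hm⟩ = (gd, ga)) ∧
        (∀ hm : ga * gd * ga ∈ H, ψ ⟨ga * gd * ga, hm⟩ = (gb, 1)) := by
  refine ⟨grigStabilizer, fun g => Subgroup.mem_subgroupOf, grigPsi, grigPsi_injective,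
    psiProp_grigPsi, ?_, ?_, ?_, ?_, ?_, ?_⟩ <;>
  exact fun _ => grigPsi_eq_of_apply_cons (fun _ => rfl) (fun _ => rfl)
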